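/- Uniform convergence of the subsample means: under conditions (C1) and (C3) (in particular log K = o(√n)), the maximal deviation max_{1 ≤ k ≤ K} |μ̂^{(k)} − μ| converges to 0 in probability along the sequence of experiments, where μ = E(X_1). -/

import Mathlib

open MeasureTheory ProbabilityTheory Filter Asymptotics
open scoped ENNReal NNReal Topology

/-- The subsample mean `μ̂⁽ᵏ⁾ = n⁻¹ ∑ₘ X_{i_m^{(k)}}` based on the subsample drawn by
the index map `idxk`. -/
noncomputable def subMean {Ω : Type*} {N n : ℕ} (X : ℕ → Ω → ℝ)
    (idxk : Fin n → Ω → Fin N) (ω : Ω) : ℝ :=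
  (n : ℝ)⁻¹ * ∑ m, X (idxk m ω).val ω

/-- The leave-one-out subsample mean `μ̂⁽ᵏ⁾₋ₘ = (n-1)⁻¹ ∑_{m' ≠ m} X_{i_{m'}^{(k)}}`. -/
noncomputable def looMean {Ω : Type*} {N n : ℕ} (X : ℕ → Ω → ℝ)
    (idxk : Fin n → Ω → Fin N) (m : Fin n) (ω : Ω) : ℝ :=
  ((n : ℝ) - 1)⁻¹ * ∑ m' ∈ Finset.univ.erase m, X (idxk m' ω).val ω

/-- The subsample one-shot (SOS) estimator `θ̂_SOS = K⁻¹ ∑ₖ g(μ̂⁽ᵏ⁾)`. -/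
noncomputable def sosEst {Ω : Type*} {N n K : ℕ} (g : ℝ → ℝ) (X : ℕ → Ω → ℝ)
    (idxs : Fin K → Fin n → Ω → Fin N) (ω : Ω) : ℝ :=
  (K : ℝ)⁻¹ * ∑ k, g (subMean X (idxs k) ω)

/-- The jackknife-debiased estimator based on the `k`-th subsample:
`θ̂⁽ᵏ⁾_JDS = θ̂⁽ᵏ⁾ − (n−1)(n⁻¹ ∑ₘ θ̂⁽ᵏ⁾₋ₘ − θ̂⁽ᵏ⁾)`. -/
noncomputable def jdsK {Ω : Type*} {N n : ℕ} (g : ℝ → ℝ) (X : ℕ → Ω → ℝ)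
    (idxk : Fin n → Ω → Fin N) (ω : Ω) : ℝ :=
  g (subMean X idxk ω) -
    ((n : ℝ) - 1) *
      ((n : ℝ)⁻¹ * ∑ m, g (looMean X idxk m ω) - g (subMean X idxk ω))

/-- The jackknife-debiased subsample (JDS) estimator `θ̂_JDS = K⁻¹ ∑ₖ θ̂⁽ᵏ⁾_JDS`. -/
noncomputable def jdsEst {Ω : Type*} {N n K : ℕ} (g : ℝ → ℝ) (X : ℕ → Ω → ℝ)
    (idxs : Fin K → Fin n → Ω → Fin N) (ω : Ω) : ℝ :=
  (K : ℝ)⁻¹ * ∑ k, jdsK g X (idxs k) ω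

/-- The squared jackknife standard error (JSE) estimator
`SÊ² = (K⁻¹ + n/N) K⁻¹ ∑ₖ ∑ₘ (θ̂⁽ᵏ⁾₋ₘ − θ̂⁽ᵏ⁾)²`. -/
noncomputable def jseSq {Ω : Type*} {N n K : ℕ} (g : ℝ → ℝ) (X : ℕ → Ω → ℝ)
    (idxs : Fin K → Fin n → Ω → Fin N) (ω : Ω) : ℝ :=
  ((K : ℝ)⁻¹ + (n : ℝ) / (N : ℝ)) * (K : ℝ)⁻¹ *
    ∑ k, ∑ m, (g (looMean X (idxs k) m ω) - g (subMean X (idxs k) ω)) ^ 2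

open Real

/-!
Split each deviation at the full-sample mean `X̄ = N⁻¹ ∑ⱼ Xⱼ`:
`|μ̂⁽ᵏ⁾ - μ| ≤ |μ̂⁽ᵏ⁾ - X̄| + |X̄ - μ|`. The second term tends to zero by the strong law of large
numbers. For the first, truncate at `L = √(2 log N / ν)`: by the sub-Gaussian tail, some `|Xⱼ|`
exceeds `L` with probability at most `C / N`. Conditionally on the observations, and when they
are all bounded by `L`, a subsample mean is an average of `n` independent uniform draws from a
population in `[-L, L]`, so Hoeffding's inequality gives
`P(|μ̂⁽ᵏ⁾ - X̄| ≥ ε / 2) ≤ 2 exp(-ε² ν n / (16 log N))`. Since `N ≤ n⁴` eventually,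
`log N ≤ 8 √n`, so the union bound over the `K` subsamples is at most `2 K exp(-c √n)`, which
tends to zero because `log K = o(√n)`.
-/

noncomputable def fullSampleMean {Ω : Type*} (X : ℕ → Ω → ℝ) (N : ℕ) (ω : Ω) : ℝ :=
  (N : ℝ)⁻¹ * ∑ j : Fin N, X j ω

lemma measureReal_abs_sum_ge_le_of_iIndepFun {Ω ι : Type*} [MeasurableSpace Ω] {μ : Measure Ω}
    [IsFiniteMeasure μ] {X : ι → Ω → ℝ} (h_indep : iIndepFun X μ) {c : ι → ℝ≥0}
    {s : Finset ι} (h_subG : ∀ i ∈ s, HasSubgaussianMGF (X i) (c i) μ) {ε : ℝ} (hε : 0 ≤ ε) :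
    μ.real {ω | ε ≤ |∑ i ∈ s, X i ω|} ≤ 2 * exp (-ε ^ 2 / (2 * ∑ i ∈ s, c i)) := by
  have h_indep_neg : iIndepFun (fun i => -X i) μ :=
    h_indep.comp (fun _ => Neg.neg) (fun _ => measurable_neg)
  have h_upper := HasSubgaussianMGF.measure_sum_ge_le_of_iIndepFun h_indep h_subG hε
  have h_lower := HasSubgaussianMGF.measure_sum_ge_le_of_iIndepFun h_indep_neg
    (fun i hi => (h_subG i hi).neg) hε
  have h_split : {ω | ε ≤ |∑ i ∈ s, X i ω|}
      ⊆ {ω | ε ≤ ∑ i ∈ s, X i ω} ∪ {ω | ε ≤ ∑ i ∈ s, (-X i) ω} := by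
    intro ω (hω : ε ≤ |∑ i ∈ s, X i ω|)
    simp only [Set.mem_union, Set.mem_ofPred_eq, Pi.neg_apply, Finset.sum_neg_distrib]
    rcases le_abs'.1 hω with h | h
    · exact Or.inr (by linarith)
    · exact Or.inl h
  calc μ.real {ω | ε ≤ |∑ i ∈ s, X i ω|}
      ≤ μ.real {ω | ε ≤ ∑ i ∈ s, X i ω} + μ.real {ω | ε ≤ ∑ i ∈ s, (-X i) ω} :=
        (measureReal_mono h_split).trans (measureReal_union_le _ _)
    _ ≤ 2 * exp (-ε ^ 2 / (2 * ∑ i ∈ s, c i)) := by linarith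

lemma integral_comp_eq_of_uniform {Ω : Type*} [MeasurableSpace Ω] {P : Measure Ω}
    [IsFiniteMeasure P] {N : ℕ} {I : Ω → Fin N} (hI : Measurable I) (hunif : ∀ j, P (I ⁻¹' {j}) = (N : ℝ≥0∞)⁻¹)
    (f : Fin N → ℝ) :
    ∫ ω, f (I ω) ∂P = (N : ℝ)⁻¹ * ∑ j, f j := by
  rw [← integral_map hI.aemeasurable (by fun_prop), integral_fintype (.of_finite),
    Finset.mul_sum]
  refine Finset.sum_congr rfl fun j _ => ?_
  rw [measureReal_def, Measure.map_apply hI (measurableSet_singleton j), hunif, smul_eq_mul,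
    ENNReal.toReal_inv, ENNReal.toReal_natCast]

lemma measureReal_abs_sampleMean_sub_ge_le {Ω : Type*} [MeasurableSpace Ω] {P : Measure Ω}
    [IsProbabilityMeasure P] {N n : ℕ} (hn : 0 < n) {I : Fin n → Ω → Fin N}
    (hI : ∀ m, Measurable (I m)) (hindep : iIndepFun I P)
    (hunif : ∀ m j, P (I m ⁻¹' {j}) = (N : ℝ≥0∞)⁻¹) (x : Fin N → ℝ) {L : ℝ} (hL : 0 < L)
    (hx : ∀ j, |x j| ≤ L) {δ : ℝ} (hδ : 0 ≤ δ) :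
    P.real {ω | δ ≤ |(n : ℝ)⁻¹ * ∑ m, x (I m ω) - (N : ℝ)⁻¹ * ∑ j, x j|}
      ≤ 2 * exp (-(n * δ ^ 2) / (2 * L ^ 2)) := by
  set xbar := (N : ℝ)⁻¹ * ∑ j, x j
  have h_subG : ∀ m ∈ Finset.univ, HasSubgaussianMGF (fun ω => x (I m ω) - xbar)
      ((‖L - -L‖₊ / 2) ^ 2) P := by
    intro m _
    have := hasSubgaussianMGF_of_mem_Icc (μ := P) (X := fun ω => x (I m ω)) (a := -L) (b := L)
      (by fun_prop) (ae_of_all _ fun ω => abs_le.1 (hx _))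
    rwa [integral_comp_eq_of_uniform (hI m) (hunif m)] at this
  have h_indep : iIndepFun (fun m ω => x (I m ω) - xbar) P :=
    hindep.comp (fun _ j => x j - xbar) (fun _ => .of_discrete)
  have h_param : ((∑ _m : Fin n, (‖L - -L‖₊ / 2) ^ 2 : ℝ≥0) : ℝ) = n * L ^ 2 := by
    simp only [Finset.sum_const, Finset.card_univ, Fintype.card_fin, nsmul_eq_mul,
      NNReal.coe_mul, NNReal.coe_natCast, NNReal.coe_pow, NNReal.coe_div, coe_nnnorm,
      Real.norm_eq_abs, NNReal.coe_ofNat, sub_neg_eq_add, ← two_mul, abs_mul, abs_two,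
      abs_of_pos hL]
    ring
  have h_sum : ∀ ω, ∑ m, (x (I m ω) - xbar) = n * ((n : ℝ)⁻¹ * ∑ m, x (I m ω) - xbar) := by
    intro ω
    rw [Finset.sum_sub_distrib, Finset.sum_const, Finset.card_univ, Fintype.card_fin,
      nsmul_eq_mul]
    field_simp
  have := measureReal_abs_sum_ge_le_of_iIndepFun h_indep h_subG (ε := n * δ) (by positivity)
  simp_rw [h_param, h_sum, abs_mul, Nat.abs_cast] at this
  convert this using 3
  · ext ω
    exact (mul_le_mul_iff_right₀ (by positivity)).symm
  · field_simp

lemma IndepFun.measure_preimage_le_of_forall_section_le {Ω α β : Type*} [MeasurableSpace Ω]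
    [MeasurableSpace α] [MeasurableSpace β] {P : Measure Ω} [IsProbabilityMeasure P]
    {X : Ω → α} {Y : Ω → β} (hX : Measurable X) (hY : Measurable Y) (hXY : IndepFun X Y P)
    {S : Set (α × β)} (hS : MeasurableSet S) {c : ℝ≥0∞}
    (hc : ∀ a, P (Y ⁻¹' {b | (a, b) ∈ S}) ≤ c) :
    P ((fun ω => (X ω, Y ω)) ⁻¹' S) ≤ c := by
  have := Measure.isProbabilityMeasure_map (μ := P) hX.aemeasurable
  rw [← Measure.map_apply (hX.prodMk hY) hS,
    (indepFun_iff_map_prod_eq_prod_map_map hX.aemeasurable hY.aemeasurable).1 hXY,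
    Measure.prod_apply hS]
  calc ∫⁻ a, P.map Y (Prod.mk a ⁻¹' S) ∂P.map X ≤ ∫⁻ _, c ∂P.map X := by
        refine lintegral_mono fun a => ?_
        rw [Measure.map_apply hY (measurable_prodMk_left hS)]
        exact hc a
    _ = c := by simp

lemma measure_abs_subMean_sub_fullSampleMean_ge_le {Ω : Type*} [MeasurableSpace Ω]
    {P : Measure Ω} [IsProbabilityMeasure P] {N n : ℕ} (hn : 0 < n) {X : ℕ → Ω → ℝ}
    (hX : ∀ i, Measurable (X i)) {I : Fin n → Ω → Fin N} (hI : ∀ m, Measurable (I m))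
    (hindep : iIndepFun I P)
    (hIX : IndepFun (fun ω m => I m ω) (fun ω (j : Fin N) => X j ω) P)
    (hunif : ∀ m j, P (I m ⁻¹' {j}) = (N : ℝ≥0∞)⁻¹) {L : ℝ} (hL : 0 < L) {δ : ℝ}
    (hδ : 0 ≤ δ) :
    P ({ω | δ ≤ |subMean X I ω - fullSampleMean X N ω|} ∩ {ω | ∀ j : Fin N, |X j ω| ≤ L})
      ≤ ENNReal.ofReal (2 * exp (-(n * δ ^ 2) / (2 * L ^ 2))) := by
  set S : Set ((Fin N → ℝ) × (Fin n → Fin N)) :=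
    {q | δ ≤ |(n : ℝ)⁻¹ * ∑ m, q.1 (q.2 m) - (N : ℝ)⁻¹ * ∑ j, q.1 j| ∧ ∀ j, |q.1 j| ≤ L}
  have hS : MeasurableSet S := by
    refine measurableSet_setOfPred.2
      (measurable_from_prod_countable_left fun i => measurableSet_setOfPred.1 ?_)
    change MeasurableSet ({x : Fin N → ℝ | δ ≤ |(n : ℝ)⁻¹ * ∑ m, x (i m) - (N : ℝ)⁻¹ * ∑ j, x j|}
      ∩ {x | ∀ j, |x j| ≤ L})
    rw [Set.ofPred_forall]
    exact (measurableSet_le (by fun_prop) (by fun_prop)).inter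
      (.iInter fun j => measurableSet_le (by fun_prop) (by fun_prop))
  refine IndepFun.measure_preimage_le_of_forall_section_le
    (measurable_pi_lambda (fun ω (j : Fin N) => X j ω) fun j => hX j)
    (measurable_pi_lambda _ hI) hIX.symm hS fun x => ?_
  by_cases hx : ∀ j, |x j| ≤ L
  · simp only [S, Set.mem_ofPred_eq, hx, implies_true, and_true]
    rw [← ofReal_measureReal]
    exact ENNReal.ofReal_le_ofReal
      (measureReal_abs_sampleMean_sub_ge_le hn hI hindep hunif x hL hx hδ)
  · simp [S, hx]

lemma integrable_of_measure_abs_gt_le_mul_exp {Ω : Type*} [MeasurableSpace Ω] {P : Measure Ω}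
    [IsProbabilityMeasure P] {f : Ω → ℝ} (hf : Measurable f) {C ν : ℝ} (hν : 0 < ν)
    (h : ∀ s : ℝ, 0 < s → P {ω | s < |f ω|} ≤ ENNReal.ofReal (C * exp (-ν * s ^ 2))) :
    Integrable f P := by
  refine ⟨hf.aestronglyMeasurable, ?_⟩
  rw [hasFiniteIntegral_iff_norm]
  simp_rw [Real.norm_eq_abs]
  rw [lintegral_eq_lintegral_meas_lt P (.of_forall fun ω => abs_nonneg _)
    hf.abs.aemeasurable]
  refine (setLIntegral_mono (by fun_prop) h).trans_lt ?_
  exact ((integrable_exp_neg_mul_sq hν).const_mul C).restrict.lintegral_lt_top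

lemma tendstoInMeasure_fullSampleMean {Ω : Type*} [MeasurableSpace Ω] {P : Measure Ω}
    [IsProbabilityMeasure P] {X : ℕ → Ω → ℝ} (hX : ∀ i, Measurable (X i))
    (hint : Integrable (X 0) P) (hindep : iIndepFun X P)
    (hident : ∀ i, IdentDistrib (X i) (X 0) P P) {N : ℕ → ℕ} (hN : Tendsto N atTop atTop) :
    TendstoInMeasure P (fun t => fullSampleMean X (N t)) atTop (fun _ => P[X 0]) := by
  refine tendstoInMeasure_of_tendsto_ae (fun t => by fun_prop [fullSampleMean]) ?_
  filter_upwards [strong_law_ae_real X hint (fun i j hij => hindep.indepFun hij) hident]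
    with ω hω
  refine (hω.comp hN).congr fun t => ?_
  rw [Function.comp_apply, ← Fin.sum_univ_eq_sum_range (fun i => X i ω), div_eq_inv_mul]
  rfl

lemma measure_exists_abs_gt_le {Ω : Type*} [MeasurableSpace Ω] {P : Measure Ω}
    {X : ℕ → Ω → ℝ} (hident : ∀ i, IdentDistrib (X i) (X 0) P P) (N : ℕ) (L : ℝ) :
    P {ω | ∃ j : Fin N, L < |X j ω|} ≤ N * P {ω | L < |X 0 ω|} := by
  calc P {ω | ∃ j : Fin N, L < |X j ω|} ≤ ∑ j : Fin N, P {ω | L < |X j ω|} := by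
        rw [Set.ofPred_exists]
        exact measure_iUnion_fintype_le P _
    _ = N * P {ω | L < |X 0 ω|} := by
        have h_tail : ∀ i, P {ω | L < |X i ω|} = P {ω | L < |X 0 ω|} := fun i =>
          ((hident i).comp measurable_abs).measure_mem_eq measurableSet_Ioi
        simp [h_tail]

lemma log_le_eight_mul_sqrt_of_le_pow_four {x y : ℝ} (hx : 0 < x) (hxy : x ≤ y ^ 4) (hy : 0 ≤ y) :
    log x ≤ 8 * √y := by
  have h_log_y : log y ≤ 2 * √y := by
    have := Real.log_le_rpow_div hy one_half_pos
    rwa [← Real.sqrt_eq_rpow, div_div_eq_mul_div, div_one, mul_comm] at this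
  calc log x ≤ log (y ^ 4) := log_le_log hx hxy
    _ = 4 * log y := by rw [Real.log_pow]; norm_num
    _ ≤ 8 * √y := by linarith

lemma tendsto_mul_exp_neg_div_log {n N K : ℕ → ℕ} {a : ℝ} (ha : 0 < a)
    (hn : Tendsto n atTop atTop) (hN : ∀ t, 1 < N t)
    (hNn : ∀ᶠ t in atTop, (N t : ℝ) ≤ (n t : ℝ) ^ 4) (hK : ∀ t, 0 < K t)
    (hlogK : (fun t => log (K t)) =o[atTop] fun t => √(n t)) :
    Tendsto (fun t => (K t : ℝ) * exp (-(a * n t / log (N t)))) atTop (𝓝 0) := by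
  have h_sqrt : Tendsto (fun t => √(n t : ℝ)) atTop atTop :=
    tendsto_sqrt_atTop.comp (tendsto_natCast_atTop_atTop.comp hn)
  have h_limit : Tendsto (fun t => exp (-(a / 16 * √(n t : ℝ)))) atTop (𝓝 0) :=
    tendsto_exp_atBot.comp (tendsto_neg_atTop_atBot.comp (h_sqrt.const_mul_atTop (by linarith)))
  refine squeeze_zero' (.of_forall fun t => by positivity) ?_ h_limit
  filter_upwards [hNn, hlogK.bound (by linarith : 0 < a / 16), hn.eventually_ge_atTop 1]
    with t hNn_t hK_t hn_t
  have h_sqrt_pos : 0 < √(n t : ℝ) := Real.sqrt_pos.2 (by exact_mod_cast hn_t)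
  have hN_t : (1 : ℝ) < N t := by exact_mod_cast hN t
  have h_logN_pos : 0 < log (N t) := Real.log_pos hN_t
  have h_logN : log (N t) ≤ 8 * √(n t : ℝ) :=
    log_le_eight_mul_sqrt_of_le_pow_four (by linarith) hNn_t (by positivity)
  have h_logK : log (K t) ≤ a / 16 * √(n t : ℝ) := by
    simpa [Real.norm_eq_abs, abs_of_pos h_sqrt_pos] using (le_abs_self _).trans hK_t
  have h_exponent : a / 8 * √(n t : ℝ) ≤ a * n t / log (N t) := by
    rw [le_div_iff₀ h_logN_pos]
    calc a / 8 * √(n t : ℝ) * log (N t) ≤ a / 8 * √(n t : ℝ) * (8 * √(n t : ℝ)) := by gcongr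
      _ = a * (√(n t : ℝ) * √(n t : ℝ)) := by ring
      _ = a * n t := by rw [Real.mul_self_sqrt (by positivity)]
  calc (K t : ℝ) * exp (-(a * n t / log (N t))) = exp (log (K t) - a * n t / log (N t)) := by
        rw [exp_sub, exp_log (by exact_mod_cast hK t), exp_neg]
        ring
    _ ≤ exp (-(a / 16 * √(n t : ℝ))) := by gcongr; linarith

lemma measure_dist_iSup_subMean_ge_le {Ω : Type*} [MeasurableSpace Ω] (P : Measure Ω)
    {N n K : ℕ} (hK : 0 < K) (X : ℕ → Ω → ℝ) (idx : Fin K → Fin n → Ω → Fin N)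
    (μ L ε : ℝ) :
    P {ω | ε ≤ dist (⨆ k, |subMean X (idx k) ω - μ|) 0}
      ≤ P {ω | ε / 2 ≤ dist (fullSampleMean X N ω) μ} + P {ω | ∃ j : Fin N, L < |X j ω|}
        + ∑ k, P ({ω | ε / 2 ≤ |subMean X (idx k) ω - fullSampleMean X N ω|}
            ∩ {ω | ∀ j : Fin N, |X j ω| ≤ L}) := by
  have : Nonempty (Fin K) := ⟨⟨0, hK⟩⟩
  have h_cover : {ω | ε ≤ dist (⨆ k, |subMean X (idx k) ω - μ|) 0}
      ⊆ {ω | ε / 2 ≤ dist (fullSampleMean X N ω) μ} ∪ {ω | ∃ j : Fin N, L < |X j ω|}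
        ∪ ⋃ k, {ω | ε / 2 ≤ |subMean X (idx k) ω - fullSampleMean X N ω|}
            ∩ {ω | ∀ j : Fin N, |X j ω| ≤ L} := by
    intro ω (hω : ε ≤ dist (⨆ k, |subMean X (idx k) ω - μ|) 0)
    obtain ⟨k, hk⟩ := exists_eq_ciSup_of_finite (f := fun k => |subMean X (idx k) ω - μ|)
    rw [← hk, Real.dist_0_eq_abs, abs_abs] at hω
    by_cases hB : ∃ j : Fin N, L < |X j ω|
    · exact .inl (.inr hB)
    rcases lt_or_ge (dist (fullSampleMean X N ω) μ) (ε / 2) with hA | hA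
    · refine .inr (Set.mem_iUnion.2 ⟨k, ?_, fun j => not_lt.1 fun hj => hB ⟨j, hj⟩⟩)
      have := abs_sub_le (subMean X (idx k) ω) (fullSampleMean X N ω) μ
      rw [Real.dist_eq] at hA
      exact (by linarith : ε / 2 ≤ |subMean X (idx k) ω - fullSampleMean X N ω|)
    · exact .inl (.inl hA)
  calc _ ≤ _ := measure_mono h_cover
    _ ≤ _ := (measure_union_le _ _).trans
        (add_le_add (measure_union_le _ _) (measure_iUnion_fintype_le P _))

lemma measure_dist_iSup_subMean_ge_le_of_subgaussian {Ω : Type*} [MeasurableSpace Ω]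
    {P : Measure Ω} [IsProbabilityMeasure P] {N n K : ℕ} (hN : 1 < N) (hn : 0 < n)
    (hK : 0 < K) {X : ℕ → Ω → ℝ} (hX : ∀ i, Measurable (X i))
    (hident : ∀ i, IdentDistrib (X i) (X 0) P P) {idx : Fin K → Fin n → Ω → Fin N}
    (hidx : ∀ k m, Measurable (idx k m))
    (hindep : iIndepFun (fun p : Fin K × Fin n => idx p.1 p.2) P)
    (hidxX : IndepFun (fun ω (p : Fin K × Fin n) => idx p.1 p.2 ω)
      (fun ω (j : Fin N) => X j ω) P)
    (hunif : ∀ k m j, P (idx k m ⁻¹' {j}) = (N : ℝ≥0∞)⁻¹) {C ν : ℝ} (hν : 0 < ν)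
    (htail : ∀ s : ℝ, 0 < s → P {ω | s < |X 0 ω|} ≤ ENNReal.ofReal (C * exp (-ν * s ^ 2)))
    (μ : ℝ) {ε : ℝ} (hε : 0 < ε) :
    P {ω | ε ≤ dist (⨆ k, |subMean X (idx k) ω - μ|) 0}
      ≤ P {ω | ε / 2 ≤ dist (fullSampleMean X N ω) μ} + ENNReal.ofReal (C / N)
        + ENNReal.ofReal (2 * (K * exp (-(ε ^ 2 * ν / 16 * n / log N)))) := by
  have hN_pos : (0 : ℝ) < N := by positivity
  have h_logN : 0 < log N := Real.log_pos (by exact_mod_cast hN)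
  set L := √(2 * log N / ν)
  have hL : 0 < L := Real.sqrt_pos.2 (by positivity)
  have hL_sq : L ^ 2 = 2 * log N / ν := Real.sq_sqrt (by positivity)
  refine (measure_dist_iSup_subMean_ge_le P hK X idx μ L ε).trans
    (add_le_add (add_le_add le_rfl ?_) ?_)
  · calc P {ω | ∃ j : Fin N, L < |X j ω|} ≤ N * ENNReal.ofReal (C * exp (-ν * L ^ 2)) :=
          (measure_exists_abs_gt_le hident N L).trans (by gcongr; exact htail L hL)
      _ = ENNReal.ofReal (C / N) := by
          have h_exp : exp (-ν * L ^ 2) = ((N : ℝ) ^ 2)⁻¹ := by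
            rw [hL_sq, ← exp_log (by positivity : (0 : ℝ) < N ^ 2), ← exp_neg, Real.log_pow]
            congr 1
            field_simp
            norm_num
          rw [← ENNReal.ofReal_natCast, ← ENNReal.ofReal_mul hN_pos.le, h_exp]
          congr 1
          field_simp
  · calc ∑ k, P ({ω | ε / 2 ≤ |subMean X (idx k) ω - fullSampleMean X N ω|}
          ∩ {ω | ∀ j : Fin N, |X j ω| ≤ L})
        ≤ ∑ _k : Fin K, ENNReal.ofReal (2 * exp (-(n * (ε / 2) ^ 2) / (2 * L ^ 2))) := by
          refine Finset.sum_le_sum fun k _ => ?_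
          exact measure_abs_subMean_sub_fullSampleMean_ge_le hn hX (hidx k)
            (hindep.precomp (g := Prod.mk k) (Prod.mk_right_injective k))
            (hidxX.comp (measurable_pi_lambda _ fun m => measurable_pi_apply (k, m))
              measurable_id)
            (hunif k) hL (by positivity)
      _ = ENNReal.ofReal (2 * (K * exp (-(ε ^ 2 * ν / 16 * n / log N)))) := by
          rw [Finset.sum_const, Finset.card_univ, Fintype.card_fin, nsmul_eq_mul,
            ← ENNReal.ofReal_natCast, ← ENNReal.ofReal_mul (by positivity), hL_sq,
            show -(n * (ε / 2) ^ 2) / (2 * (2 * log N / ν)) = -(ε ^ 2 * ν / 16 * n / log N) by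
              field_simp; ring, mul_left_comm]

/-- uniform convergence of the subsample means. Under (C1) and (C3)
(in particular `log K = o(√n)`), `max_{1 ≤ k ≤ K} |μ̂⁽ᵏ⁾ − μ| → 0` in probability,
where `μ = E(X₁)`. -/
theorem subsample_means_uniform_consistency
    {Ω : Type*} [MeasurableSpace Ω] (P : Measure Ω) [IsProbabilityMeasure P]
    -- the sequence of experiments: whole-sample sizes N_t, subsample sizes n_t,
    -- numbers of subsamples K_t
    (Nseq nseq Kseq : ℕ → ℕ)
    (hn2 : ∀ t, 2 ≤ nseq t) (hK1 : ∀ t, 1 ≤ Kseq t)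
    -- an i.i.d. sequence of real random variables; experiment t uses X₀, …, X_{N_t - 1}
    (X : ℕ → Ω → ℝ)
    (hXmeas : ∀ i, Measurable (X i))
    (hXindep : iIndepFun X P)
    (hXident : ∀ i, IdentDistrib (X i) (X 0) P P)
    -- for each experiment t, the sampling indices: measurable, mutually independent,
    -- independent of (X₁, …, X_{N_t}), and uniform on {1, …, N_t}
    (idx : ∀ t, Fin (Kseq t) → Fin (nseq t) → Ω → Fin (Nseq t))
    (hidxmeas : ∀ t k m, Measurable (idx t k m))
    (hidxindep : ∀ t, iIndepFun
      (fun p : Fin (Kseq t) × Fin (nseq t) => idx t p.1 p.2) P)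
    (hidxX : ∀ t, IndepFun
      (fun ω (p : Fin (Kseq t) × Fin (nseq t)) => idx t p.1 p.2 ω)
      (fun ω (i : Fin (Nseq t)) => X i.val ω) P)
    (hunif : ∀ t k m (j : Fin (Nseq t)), P (idx t k m ⁻¹' {j}) = (Nseq t : ℝ≥0∞)⁻¹)
    -- (C1) sub-Gaussian distribution
    (hsubG : ∃ C ν : ℝ, 0 < C ∧ 0 < ν ∧
      ∀ s : ℝ, 0 < s → P {ω | s < |X 0 ω|} ≤ ENNReal.ofReal (C * Real.exp (-ν * s ^ 2)))
    -- (C3) subsampling condition: n → ∞, n < N, N = o(n⁴), log K = o(√n)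
    (hn_inf : Tendsto nseq atTop atTop)
    (hnN : ∀ t, nseq t < Nseq t)
    (hN_inf : Tendsto Nseq atTop atTop)
    (hNn4 : (fun t => (Nseq t : ℝ)) =o[atTop] fun t => (nseq t : ℝ) ^ 4)
    (hlogK : (fun t => Real.log (Kseq t)) =o[atTop] fun t => Real.sqrt (nseq t))
    (μ : ℝ) (hμ : μ = ∫ ω, X 0 ω ∂P) :
    TendstoInMeasure P
      (fun t ω => ⨆ k : Fin (Kseq t), |subMean X (idx t k) ω - μ|)
      atTop (fun _ => 0) := by
  obtain ⟨C, ν, -, hν, htail⟩ := hsubG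
  have hN : ∀ t, 1 < Nseq t := fun t => by linarith [hn2 t, hnN t]
  have h_lln := tendstoInMeasure_iff_dist.1
    (hμ ▸ tendstoInMeasure_fullSampleMean hXmeas
      (integrable_of_measure_abs_gt_le_mul_exp (hXmeas 0) hν htail) hXindep hXident hN_inf)
  have h_tail : Tendsto (fun t => ENNReal.ofReal (C / Nseq t)) atTop (𝓝 0) := by
    simpa using ENNReal.tendsto_ofReal
      (tendsto_const_nhds.div_atTop (tendsto_natCast_atTop_atTop.comp hN_inf))
  have h_pow : ∀ᶠ t in atTop, (Nseq t : ℝ) ≤ (nseq t : ℝ) ^ 4 := by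
    filter_upwards [hNn4.bound one_pos] with t ht
    simpa using ht
  rw [tendstoInMeasure_iff_dist]
  intro ε hε
  have h_subsamples := ENNReal.tendsto_ofReal ((tendsto_mul_exp_neg_div_log
    (by positivity : 0 < ε ^ 2 * ν / 16) hn_inf hN h_pow hK1 hlogK).const_mul 2)
  rw [mul_zero, ENNReal.ofReal_zero] at h_subsamples
  refine tendsto_of_tendsto_of_tendsto_of_le_of_le tendsto_const_nhds
    (by simpa only [add_zero] using ((h_lln (ε / 2) (half_pos hε)).add h_tail).add h_subsamples)
    (fun _ => bot_le) fun t => ?_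
  exact measure_dist_iSup_subMean_ge_le_of_subgaussian (hN t) (two_pos.trans_le (hn2 t)) (hK1 t)
    hXmeas hXident (hidxmeas t) (hidxindep t) (hidxX t) (hunif t) hν htail μ hε
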